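/- arXiv:2502.20461 — 4 statements merged into one kernel-verified Lean document; each statement's English description precedes it below -/
import Mathlib

section
/- If a finite set system S = (U, F) has VC-dimension at most d, then for every X ⊆ U with |X| = n, the number of distinct traces |{X ∩ S : S ∈ F}| is at most ∑_{i=0}^{d} C(n,i). (Sauer–Shelah lemma.) -/
/-- Sauer–Shelah: If the finite set system `(U, F)` has VC-dimension at
most `d` (every shattered set has size at most `d`), then for every `X ⊆ U` with
`|X| = n`, the number of distinct traces `|{X ∩ S : S ∈ F}|` is at most
`∑_{i=0}^{d} C(n,i)`. -/
theorem sauer_shelah {U : Type*} [Fintype U] [DecidableEq U]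
    (F : Finset (Finset U)) (d : ℕ)
    (hVC : ∀ Z : Finset U, (F.image (fun S => Z ∩ S)).card = 2 ^ Z.card → Z.card ≤ d) :
    ∀ (X : Finset U) (n : ℕ), X.card = n →
      (F.image (fun S => X ∩ S)).card ≤ ∑ i ∈ Finset.range (d + 1), Nat.choose n i := by
  intro X n hX
  set G := F.image (fun S => X ∩ S) with hG
  -- every set shattered by G has card ≤ d and is ⊆ X
  have key : ∀ s, G.Shatters s → s ⊆ X ∧ s.card ≤ d := by
    intro s hs
    have hsX : s ⊆ X := by
      obtain ⟨u, hu, hsu⟩ := hs (Finset.Subset.refl s)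
      rw [← hsu]
      simp only [hG, Finset.mem_image] at hu
      obtain ⟨S, _, rfl⟩ := hu
      exact (Finset.inter_subset_right).trans Finset.inter_subset_left
    refine ⟨hsX, hVC s ?_⟩
    -- show F.image (s ∩ ·) = s.powerset
    have himg : F.image (fun S => s ∩ S) = s.powerset := by
      apply Finset.Subset.antisymm
      · intro t ht
        simp only [Finset.mem_image] at ht
        obtain ⟨S, _, rfl⟩ := ht
        exact Finset.mem_powerset.2 Finset.inter_subset_left
      · intro t ht
        rw [Finset.mem_powerset] at ht
        obtain ⟨u, hu, hsu⟩ := hs ht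
        simp only [hG, Finset.mem_image] at hu
        obtain ⟨S, hS, rfl⟩ := hu
        refine Finset.mem_image.2 ⟨S, hS, ?_⟩
        rw [← hsu, ← Finset.inter_assoc, Finset.inter_eq_left.2 hsX]
    rw [himg, Finset.card_powerset]
  calc G.card ≤ G.shatterer.card := Finset.card_le_card_shatterer G
    _ ≤ ((Finset.range (d+1)).biUnion (fun i => X.powersetCard i)).card := by
        apply Finset.card_le_card
        intro s hs
        rw [Finset.mem_shatterer] at hs
        obtain ⟨hsX, hsd⟩ := key s hs
        exact Finset.mem_biUnion.2 ⟨s.card, Finset.mem_range.2 (Nat.lt_succ_of_le hsd),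
          Finset.mem_powersetCard.2 ⟨hsX, rfl⟩⟩
    _ ≤ ∑ i ∈ Finset.range (d + 1), Nat.choose n i := by
        refine Finset.card_biUnion_le.trans ?_
        apply Finset.sum_le_sum
        intro i _
        rw [Finset.card_powersetCard, hX]
end

section
/- Let A ∈ {0,1}^{n×n} be a square matrix with all diagonal entries 0, and let G be the upper graph of A, i.e., the graph on [n] with edges {i,j} (i<j) exactly when A_{i,j}=1. If the VC-dimension of G is at least 4d, then the VC-dimension of A is at least d. Equivalently, if VCdim(A) ≤ d then VCdim(G) ≤ 4d+3. -/
/-- A set `R` of rows is shattered by the columns of `A`: every 0/1 pattern on `R`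
is realized by some column. -/
def colShat {m n : ℕ} (A : Fin m → Fin n → Bool) (R : Finset (Fin m)) : Prop :=
  ∀ p : Fin m → Bool, ∃ j : Fin n, ∀ i ∈ R, A i j = p i

/-- A set `C` of columns is shattered by the rows of `A`. -/
def rowShat {m n : ℕ} (A : Fin m → Fin n → Bool) (C : Finset (Fin n)) : Prop :=
  ∀ p : Fin n → Bool, ∃ i : Fin m, ∀ j ∈ C, A i j = p j

/-- The VC-dimension of a binary matrix: the maximum of the VC-dimensions of its
column set system and its row set system. -/
noncomputable def matVC {m n : ℕ} (A : Fin m → Fin n → Bool) : ℕ :=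
  sSup {k | (∃ R : Finset (Fin m), R.card = k ∧ colShat A R) ∨
            (∃ C : Finset (Fin n), C.card = k ∧ rowShat A C)}

/-- The VC-dimension of the neighborhood set system of a graph given by a Boolean
adjacency relation `adj` on a finite vertex type. -/
noncomputable def graphVC {W : Type*} [Fintype W] (adj : W → W → Bool) : ℕ :=
  sSup {k | ∃ X : Finset W, X.card = k ∧
    ∀ p : W → Bool, ∃ v : W, ∀ u ∈ X, adj u v = p u}

/-- The upper graph of a square matrix `A`: `i ~ j` (for `i < j`) iff `A i j = 1`. -/
def upperAdj {n : ℕ} (A : Fin n → Fin n → Bool) (i j : Fin n) : Bool :=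
  if i < j then A i j else if j < i then A j i else false

/-!
Split a set `X` shattered by the neighborhoods of the upper graph into its lower half `L` and
its upper half `U`. If `s ⊆ L` is realized by no column of `A` and `t ⊆ U` by no row, then no
vertex `v` has neighborhood `s ∪ t` on `X`: if `v` lies above all of `L`, its column of `A`
realizes `s` on `L`; otherwise `v` lies below all of `U`, and its row realizes `t` on `U`.
So one of the halves is shattered by `A`, which gives `VCdim(G) ≤ 2 VCdim(A) + 1`.
-/

open Finset

theorem Finset.exists_lt_split {α : Type*} [LinearOrder α] (X : Finset α) {a : ℕ}
    (ha : a ≤ #X) :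
    ∃ L ⊆ X, ∃ U ⊆ X, #L = a ∧ #U = #X - a ∧ ∀ l ∈ L, ∀ u ∈ U, l < u := by
  set f := X.orderEmbOfFin rfl
  have hf : ∀ i, f i ∈ X := X.orderEmbOfFin_mem rfl
  have hcard := card_filter_add_card_filter_not (s := (univ : Finset (Fin #X)))
    (fun i => (i : ℕ) < a)
  have hlow : #{i : Fin #X | (i : ℕ) < a} = a := by rw [Fin.card_filter_val_lt]; omega
  refine ⟨(univ.filter fun i : Fin #X => (i : ℕ) < a).map f.toEmbedding, ?_,
    (univ.filter fun i : Fin #X => ¬ (i : ℕ) < a).map f.toEmbedding, ?_,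
    by rw [card_map, hlow], ?_, ?_⟩
  · simp [subset_iff, hf]
  · simp [subset_iff, hf]
  · rw [card_map]; simp only [card_univ, Fintype.card_fin] at hcard; omega
  · simp only [mem_map, mem_filter, mem_univ, true_and]
    rintro _ ⟨i, hi, rfl⟩ _ ⟨j, hj, rfl⟩
    exact f.strictMono (Fin.lt_def.2 (by omega))

def nbhdShat {W : Type*} (adj : W → W → Bool) (X : Finset W) : Prop :=
  ∀ p : W → Bool, ∃ v : W, ∀ u ∈ X, adj u v = p u

section UpperGraph

variable {n : ℕ} {A : Fin n → Fin n → Bool}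

theorem upperAdj_of_lt {i j : Fin n} (h : i < j) : upperAdj A i j = A i j := if_pos h

theorem upperAdj_of_gt {i j : Fin n} (h : j < i) : upperAdj A i j = A j i := by
  rw [upperAdj, if_neg h.not_gt, if_pos h]

theorem colShat_or_rowShat_of_nbhdShat_upperAdj {L U : Finset (Fin n)}
    (hLU : ∀ l ∈ L, ∀ u ∈ U, l < u) (hshat : nbhdShat (upperAdj A) (L ∪ U)) :
    colShat A L ∨ rowShat A U := by
  by_contra! ⟨hcol, hrow⟩
  simp only [colShat, rowShat, not_forall, not_exists] at hcol hrow
  obtain ⟨p, hp⟩ := hcol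
  obtain ⟨q, hq⟩ := hrow
  obtain ⟨v, hv⟩ := hshat fun u => if u ∈ L then p u else q u
  by_cases hbelow : ∃ l ∈ L, v ≤ l
  · obtain ⟨l, hl, hvl⟩ := hbelow
    obtain ⟨j, hj, hne⟩ := hq v
    have hjL : j ∉ L := fun hjL => (hLU j hjL j hj).false
    refine hne ?_
    simpa [hjL, upperAdj_of_gt (hvl.trans_lt (hLU l hl j hj))] using hv j (mem_union_right L hj)
  · simp only [not_exists, not_and, not_le] at hbelow
    obtain ⟨i, hi, hne⟩ := hp v
    refine hne ?_
    simpa [hi, upperAdj_of_lt (hbelow i hi)] using hv i (mem_union_left U hi)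

end UpperGraph

theorem bddAbove_matVC_set {m n : ℕ} (A : Fin m → Fin n → Bool) :
    BddAbove {k | (∃ R : Finset (Fin m), R.card = k ∧ colShat A R) ∨
      (∃ C : Finset (Fin n), C.card = k ∧ rowShat A C)} := by
  refine ⟨m + n, ?_⟩
  rintro k (⟨R, rfl, -⟩ | ⟨C, rfl, -⟩)
  · exact (card_le_univ R).trans (by simp)
  · exact (card_le_univ C).trans (by simp)

theorem card_le_matVC_of_colShat {m n : ℕ} {A : Fin m → Fin n → Bool} {R : Finset (Fin m)}
    (h : colShat A R) : #R ≤ matVC A :=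
  le_csSup (bddAbove_matVC_set A) (Or.inl ⟨R, rfl, h⟩)

theorem card_le_matVC_of_rowShat {m n : ℕ} {A : Fin m → Fin n → Bool} {C : Finset (Fin n)}
    (h : rowShat A C) : #C ≤ matVC A :=
  le_csSup (bddAbove_matVC_set A) (Or.inr ⟨C, rfl, h⟩)

theorem exists_nbhdShat_card_eq_graphVC {W : Type*} [Fintype W] {adj : W → W → Bool}
    (hpos : 0 < graphVC adj) : ∃ X : Finset W, #X = graphVC adj ∧ nbhdShat adj X := by
  have hne : {k | ∃ X : Finset W, #X = k ∧ nbhdShat adj X}.Nonempty := by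
    refine Set.nonempty_iff_ne_empty.2 fun hempty => hpos.ne' ?_
    change sSup {k | ∃ X : Finset W, #X = k ∧ nbhdShat adj X} = 0
    rw [hempty, csSup_empty, Nat.bot_eq_zero]
  exact Nat.sSup_mem hne ⟨Fintype.card W, by rintro k ⟨X, rfl, -⟩; exact card_le_univ X⟩

theorem graphVC_upperAdj_le {n : ℕ} (A : Fin n → Fin n → Bool) :
    graphVC (upperAdj A) ≤ 2 * matVC A + 1 := by
  rcases (graphVC (upperAdj A)).eq_zero_or_pos with _ | hpos
  · omega
  obtain ⟨X, hXcard, hX⟩ := exists_nbhdShat_card_eq_graphVC hpos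
  obtain ⟨L, hLX, U, hUX, hL, hU, hLU⟩ := X.exists_lt_split (a := #X / 2) (Nat.div_le_self _ _)
  have hshat : nbhdShat (upperAdj A) (L ∪ U) := fun p =>
    (hX p).imp fun v hv u hu => hv u (union_subset hLX hUX hu)
  rcases colShat_or_rowShat_of_nbhdShat_upperAdj hLU hshat with hcol | hrow
  · have := card_le_matVC_of_colShat hcol
    omega
  · have := card_le_matVC_of_rowShat hrow
    omega

theorem vc_of_upper_graph_general {n : ℕ} (A : Fin n → Fin n → Bool)
    (d : ℕ) :
    (4 * d ≤ graphVC (upperAdj A) → d ≤ matVC A) ∧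
    (matVC A ≤ d → graphVC (upperAdj A) ≤ 4 * d + 3) := by
  have := graphVC_upperAdj_le A
  constructor <;> intro h <;> omega

/-- Let `A` be a square 0-diagonal matrix and `G` its upper graph.
If `VCdim(G) ≥ 4d` then `VCdim(A) ≥ d`; equivalently, if `VCdim(A) ≤ d` then
`VCdim(G) ≤ 4d + 3`. -/
theorem vc_of_upper_graph {n : ℕ} (A : Fin n → Fin n → Bool)
    (hdiag : ∀ i, A i i = false) (d : ℕ) :
    (4 * d ≤ graphVC (upperAdj A) → d ≤ matVC A) ∧
    (matVC A ≤ d → graphVC (upperAdj A) ≤ 4 * d + 3) :=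
  vc_of_upper_graph_general A d
end

section
/- Suppose every finite graph H of VC-dimension at most D on m vertices contains a homogeneous set (clique or independent set) of size at least m^{e}. Let A ∈ {0,1}^{n×2n} be a switch matrix of size n with VC-dimension at most d, and set D = 4d+3. Then A contains a square (α, β, *)-submatrix of size at least n^{e} with α ≠ β, i.e., a k×k submatrix C with k ≥ n^{e} such that C_{i,j} = α for all i < j and C_{i,i} = β for all i. -/
/-- `S ∈ {0,1}^{m×2m}` is a switch matrix of size `m` (0-indexed): `S i (2i) = 0`,
`S i (2i+1) = 1` for all `i`, and `S i (2j) = S i (2j+1)` for all `i < j`. -/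
def IsSwitchMatrix {m : ℕ} (S : Fin m → Fin (2 * m) → Bool) : Prop :=
  (∀ i : Fin m, S i ⟨2 * i.val, by have := i.isLt; omega⟩ = false ∧
      S i ⟨2 * i.val + 1, by have := i.isLt; omega⟩ = true) ∧
  (∀ i j : Fin m, i < j →
      S i ⟨2 * j.val, by have := j.isLt; omega⟩ =
      S i ⟨2 * j.val + 1, by have := j.isLt; omega⟩)

/-- `A` contains a switch submatrix of size `k` (selecting and ordering rows and
columns via injections). -/
def HasSwitchSubmatrix {M N : ℕ} (A : Fin M → Fin N → Bool) (k : ℕ) : Prop :=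
  ∃ (r : Fin k → Fin M) (c : Fin (2 * k) → Fin N),
    Function.Injective r ∧ Function.Injective c ∧
    IsSwitchMatrix (fun i j => A (r i) (c j))

/-- A graph on `Fin m` (symmetric irreflexive Boolean adjacency) of VC-dimension at
most `D` (every neighborhood-shattered set has size ≤ `D`) has a homogeneous set
(clique or independent set) of size at least `m ^ e`. -/
def EHforVC (D : ℕ) (e : ℝ) : Prop :=
  ∀ (m : ℕ) (adj : Fin m → Fin m → Bool),
    (∀ a b, adj a b = adj b a) → (∀ a, adj a a = false) →
    (∀ X : Finset (Fin m),
        (∀ p : Fin m → Bool, ∃ v, ∀ u ∈ X, adj u v = p u) → X.card ≤ D) →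
    ∃ S : Finset (Fin m), (m : ℝ) ^ e ≤ (S.card : ℝ) ∧
      ((∀ a ∈ S, ∀ b ∈ S, a ≠ b → adj a b = true) ∨
       (∀ a ∈ S, ∀ b ∈ S, adj a b = false))


def col2 {n : ℕ} (v : Fin n) : Fin (2 * n) := ⟨2 * v.val, by have := v.isLt; omega⟩
def col2' {n : ℕ} (v : Fin n) : Fin (2 * n) := ⟨2 * v.val + 1, by have := v.isLt; omega⟩

lemma col2_inj {n : ℕ} : Function.Injective (col2 (n := n)) := by
  intro a b h
  have := congrArg Fin.val h
  simp only [col2] at this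
  exact Fin.ext (by omega)

lemma col2'_inj {n : ℕ} : Function.Injective (col2' (n := n)) := by
  intro a b h
  have := congrArg Fin.val h
  simp only [col2'] at this
  exact Fin.ext (by omega)

def adjOf {n : ℕ} (A : Fin n → Fin (2 * n) → Bool) (u v : Fin n) : Bool :=
  if u < v then A u (col2 v) else if v < u then A v (col2 u) else false

lemma adjOf_symm {n : ℕ} (A : Fin n → Fin (2 * n) → Bool) (a b : Fin n) :
    adjOf A a b = adjOf A b a := by
  unfold adjOf
  rcases lt_trichotomy a b with h | h | h
  · simp [h, h.not_gt]
  · simp [h]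
  · simp [h, h.not_gt]

lemma adjOf_irrefl {n : ℕ} (A : Fin n → Fin (2 * n) → Bool) (a : Fin n) :
    adjOf A a a = false := by simp [adjOf]

lemma adjOf_lt {n : ℕ} (A : Fin n → Fin (2 * n) → Bool) {u v : Fin n} (h : u < v) :
    adjOf A u v = A u (col2 v) := by simp [adjOf, h]

lemma adjOf_gt {n : ℕ} (A : Fin n → Fin (2 * n) → Bool) {u v : Fin n} (h : v < u) :
    adjOf A u v = A v (col2 u) := by simp [adjOf, h, h.not_gt]

/-- VC bound for the graph `adjOf A`. -/
lemma adjOf_vc {n d : ℕ} (A : Fin n → Fin (2 * n) → Bool)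
    (hVCcol : ∀ R : Finset (Fin n), colShat A R → R.card ≤ d)
    (hVCrow : ∀ C : Finset (Fin (2 * n)), rowShat A C → C.card ≤ d)
    (X : Finset (Fin n))
    (hX : ∀ p : Fin n → Bool, ∃ v, ∀ u ∈ X, adjOf A u v = p u) :
    X.card ≤ 4 * d + 3 := by
  by_contra hcard
  push_neg at hcard
  have hc : 4 * d + 4 ≤ X.card := hcard
  set f := X.orderIsoOfFin rfl with hf
  set g : Fin X.card → Fin n := fun i => (f i : Fin n) with hg
  have hgmono : StrictMono g := fun i j hij => by
    exact Subtype.coe_lt_coe.mpr (f.strictMono hij)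
  have hgX : ∀ i, g i ∈ X := fun i => (f i).2
  set Xlo : Finset (Fin n) :=
    Finset.image (fun t : Fin (2 * d + 2) => g ⟨t.val, by omega⟩) Finset.univ with hXlo
  set Xhi : Finset (Fin n) :=
    Finset.image (fun t : Fin (2 * d + 2) => g ⟨t.val + (2 * d + 2), by omega⟩)
      Finset.univ with hXhi
  have hXloX : ∀ u ∈ Xlo, u ∈ X := by
    intro u hu
    rw [hXlo, Finset.mem_image] at hu
    obtain ⟨t, _, rfl⟩ := hu
    exact hgX _
  have hXhiX : ∀ u ∈ Xhi, u ∈ X := by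
    intro u hu
    rw [hXhi, Finset.mem_image] at hu
    obtain ⟨t, _, rfl⟩ := hu
    exact hgX _
  have hlohi : ∀ u ∈ Xlo, ∀ w ∈ Xhi, u < w := by
    intro u hu w hw
    rw [hXlo, Finset.mem_image] at hu
    rw [hXhi, Finset.mem_image] at hw
    obtain ⟨t, _, rfl⟩ := hu
    obtain ⟨s, _, rfl⟩ := hw
    exact hgmono (by simp [Fin.lt_def]; omega)
  have hnot : ∀ u ∈ Xlo, u ∉ Xhi := by
    intro u hu hw
    exact lt_irrefl u (hlohi u hu u hw)
  have hlocard : Xlo.card = 2 * d + 2 := by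
    rw [hXlo, Finset.card_image_of_injective _ (fun a b h => by
      have := hgmono.injective h
      have := congrArg Fin.val this
      simp at this
      exact Fin.ext this)]
    simp
  have hhicard : Xhi.card = 2 * d + 2 := by
    rw [hXhi, Finset.card_image_of_injective _ (fun a b h => by
      have := hgmono.injective h
      have := congrArg Fin.val this
      simp at this
      exact Fin.ext this)]
    simp
  by_cases hcs : colShat A Xlo
  · have := hVCcol Xlo hcs
    omega
  · unfold colShat at hcs
    push_neg at hcs
    obtain ⟨q₀, hq₀⟩ := hcs
    have hrs : rowShat A (Xhi.image col2) := by
      intro p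
      set P : Fin n → Bool := fun u => if u ∈ Xhi then p (col2 u) else q₀ u with hP
      obtain ⟨v, hv⟩ := hX P
      have hu₀ : ∃ u₀ ∈ Xlo, ¬ u₀ < v := by
        by_contra hcon
        push_neg at hcon
        obtain ⟨u, hu, hbad⟩ := hq₀ (col2 v)
        apply hbad
        have h1 := hv u (hXloX u hu)
        rw [adjOf_lt A (hcon u hu)] at h1
        rw [h1, hP]
        simp [hnot u hu]
      obtain ⟨u₀, hu₀mem, hu₀v⟩ := hu₀
      refine ⟨v, ?_⟩
      intro j hj
      rw [Finset.mem_image] at hj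
      obtain ⟨w, hw, rfl⟩ := hj
      have hvw : v < w := lt_of_le_of_lt (not_lt.mp hu₀v) (hlohi u₀ hu₀mem w hw)
      have h1 := hv w (hXhiX w hw)
      rw [adjOf_gt A hvw] at h1
      rw [h1, hP]
      simp [hw]
    have := hVCrow _ hrs
    rw [Finset.card_image_of_injective _ col2_inj] at this
    omega

/-- Assume every graph of VC-dimension at most `D = 4d+3` on `m`
vertices has a homogeneous set of size at least `m^e`. Then every switch matrix `A`
of size `n` and VC-dimension at most `d` contains a square `(α, β, *)`-submatrix of
size at least `n^e` with `α ≠ β`. -/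
theorem abstar_submatrix_of_switch {n : ℕ} (d : ℕ) (e : ℝ)
    (hEH : EHforVC (4 * d + 3) e)
    (A : Fin n → Fin (2 * n) → Bool) (hswitch : IsSwitchMatrix A)
    (hVCcol : ∀ R : Finset (Fin n), colShat A R → R.card ≤ d)
    (hVCrow : ∀ C : Finset (Fin (2 * n)), rowShat A C → C.card ≤ d) :
    ∃ (k : ℕ) (α β : Bool) (r : Fin k → Fin n) (c : Fin k → Fin (2 * n)),
      α ≠ β ∧ (n : ℝ) ^ e ≤ (k : ℝ) ∧
      Function.Injective r ∧ Function.Injective c ∧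
      (∀ i j : Fin k, i < j → A (r i) (c j) = α) ∧
      (∀ i : Fin k, A (r i) (c i) = β) := by
  obtain ⟨S, hScard, hhom⟩ := hEH n (adjOf A) (adjOf_symm A) (adjOf_irrefl A)
    (adjOf_vc A hVCcol hVCrow)
  set k := S.card with hk
  set s : Fin k → Fin n := fun i => ((S.orderIsoOfFin rfl) i : Fin n) with hs
  have hsmono : StrictMono s := fun i j hij =>
    Subtype.coe_lt_coe.mpr ((S.orderIsoOfFin rfl).strictMono hij)
  have hsS : ∀ i, s i ∈ S := fun i => ((S.orderIsoOfFin rfl) i).2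
  rcases hhom with hcl | hind
  · refine ⟨k, true, false, s, fun i => col2 (s i), by simp, hScard,
      hsmono.injective, fun a b h => hsmono.injective (col2_inj h), ?_, ?_⟩
    · intro i j hij
      have h1 := hcl (s i) (hsS i) (s j) (hsS j) (fun h => absurd h (hsmono hij).ne)
      rw [adjOf_lt A (hsmono hij)] at h1
      exact h1
    · intro i
      exact (hswitch.1 (s i)).1
  · refine ⟨k, false, true, s, fun i => col2' (s i), by simp, hScard,
      hsmono.injective, fun a b h => hsmono.injective (col2'_inj h), ?_, ?_⟩
    · intro i j hij
      have h1 := hind (s i) (hsS i) (s j) (hsS j)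
      rw [adjOf_lt A (hsmono hij)] at h1
      have h2 := hswitch.2 (s i) (s j) (hsmono hij)
      calc A (s i) (col2' (s j)) = A (s i) (col2 (s j)) := h2.symm
        _ = false := h1
    · intro i
      exact (hswitch.1 (s i)).2
end

section
/- Suppose every finite graph of VC-dimension at most 4d+3 on m vertices contains a homogeneous set of size at least m^{e}. Let A be a square (α, β, *)-matrix of size n with VC-dimension at most d (α, β, * ∈ {0,1}, entries above diagonal equal α, diagonal entries equal β). Then A contains a square (α, β, γ)-submatrix of size at least n^{e} for some γ ∈ {0,1}, i.e., a submatrix constant equal to α above the diagonal, β on the diagonal, and γ below the diagonal, using the same rows as columns indices. -/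
/-- Assume every graph of VC-dimension at most `4d+3` on `m` vertices
has a homogeneous set of size at least `m^e`. Then every square `(α, β, *)`-matrix `A`
of size `n` and VC-dimension at most `d` contains a principal `(α, β, γ)`-submatrix of
size at least `n^e` for some `γ`, given by an index set `X` used for both rows and
columns. -/
theorem abc_submatrix_of_abstar {n : ℕ} (d : ℕ) (e : ℝ)
    (hEH : EHforVC (4 * d + 3) e)
    (A : Fin n → Fin n → Bool) (α β : Bool)
    (habove : ∀ i j : Fin n, i < j → A i j = α)
    (hdiag : ∀ i : Fin n, A i i = β)
    (hVCcol : ∀ R : Finset (Fin n), colShat A R → R.card ≤ d)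
    (hVCrow : ∀ C : Finset (Fin n), rowShat A C → C.card ≤ d) :
    ∃ (γ : Bool) (X : Finset (Fin n)), (n : ℝ) ^ e ≤ (X.card : ℝ) ∧
      ∀ i ∈ X, ∀ j ∈ X,
        (i < j → A i j = α ∧ A j i = γ) ∧ A i i = β := by
  classical
  -- the "upper graph of the transpose": adjacency given by below-diagonal entries
  set adj : Fin n → Fin n → Bool := fun u v =>
    if u < v then A v u else if v < u then A u v else false with hadj
  have hsymm : ∀ a b, adj a b = adj b a := by
    intro a b
    rcases lt_trichotomy a b with h | h | h
    · simp [hadj, h, not_lt.mpr h.le, h.not_gt]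
    · simp [hadj, h]
    · simp [hadj, h, not_lt.mpr h.le, h.not_gt]
  have hirr : ∀ a, adj a a = false := by
    intro a; simp [hadj]
  have hVC : ∀ X : Finset (Fin n),
      (∀ p : Fin n → Bool, ∃ v, ∀ u ∈ X, adj u v = p u) → X.card ≤ 4 * d + 3 := by
    intro X hsh
    by_contra hcard
    push_neg at hcard
    have hk : 2 * d + 2 ≤ X.card := by omega
    -- pick the 2d+2 smallest elements of X, split into L (low d+1) and H (high d+1)
    set f : Fin (2 * d + 2) → Fin n := fun i => (X.orderIsoOfFin rfl (Fin.castLE hk i) : Fin n)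
      with hf
    have hfmono : StrictMono f := by
      intro i j hij
      have h1 : Fin.castLE hk i < Fin.castLE hk j := by
        rw [Fin.lt_def]
        simpa [Fin.coe_castLE] using hij
      exact Subtype.coe_lt_coe.mpr ((X.orderIsoOfFin rfl).strictMono h1)
    have hfX : ∀ i, f i ∈ X := fun i => (X.orderIsoOfFin rfl (Fin.castLE hk i)).2
    set L : Finset (Fin n) :=
      Finset.image (fun i : Fin (d + 1) => f ⟨(i : ℕ), by omega⟩) Finset.univ with hL
    set H : Finset (Fin n) :=
      Finset.image (fun i : Fin (d + 1) => f ⟨(i : ℕ) + (d + 1), by omega⟩) Finset.univ with hH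
    have hLX : ∀ l ∈ L, l ∈ X := by
      intro l hl; rw [hL] at hl
      simp only [Finset.mem_image] at hl
      obtain ⟨i, _, rfl⟩ := hl; exact hfX _
    have hLH : ∀ l ∈ L, ∀ h ∈ H, l < h := by
      intro l hl h hh
      rw [hL] at hl; rw [hH] at hh
      simp only [Finset.mem_image] at hl hh
      obtain ⟨i, _, rfl⟩ := hl
      obtain ⟨j, _, rfl⟩ := hh
      exact hfmono (Fin.mk_lt_mk.mpr (by omega))
    have hcardL : L.card = d + 1 := by
      rw [hL, Finset.card_image_of_injective _ ?_, Finset.card_univ, Fintype.card_fin]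
      intro i j hij
      have := hfmono.injective hij
      have : (i : ℕ) = (j : ℕ) := by simpa [Fin.ext_iff] using this
      exact Fin.ext this
    have hcardH : H.card = d + 1 := by
      rw [hH, Finset.card_image_of_injective _ ?_, Finset.card_univ, Fintype.card_fin]
      intro i j hij
      have := hfmono.injective hij
      have : (i : ℕ) = (j : ℕ) := by simpa [Fin.ext_iff] using this
      exact Fin.ext this
    -- H is not column-shattered
    have hnc : ¬ colShat A H := fun hc => by
      have := hVCcol H hc; omega
    have hnr : ¬ rowShat A L := fun hr => by
      have := hVCrow L hr; omega
    rw [colShat] at hnc; push_neg at hnc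
    rw [rowShat] at hnr; push_neg at hnr
    obtain ⟨p0, hp0⟩ := hnc
    obtain ⟨q0, hq0⟩ := hnr
    -- combine the two bad patterns
    obtain ⟨v, hv⟩ := hsh (fun x => if x ∈ H then p0 x else q0 x)
    by_cases hcase : ∀ h ∈ H, v < h
    · -- column v would realize p0 on H
      obtain ⟨i, hiH, hiv⟩ := hp0 v
      have h1 : adj i v = p0 i := by
        rw [hv i (by
          rw [hH] at hiH; simp only [Finset.mem_image] at hiH
          obtain ⟨j, _, rfl⟩ := hiH; exact hfX _)]
        simp [hiH]
      have h2 : adj i v = A i v := by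
        have hvi : v < i := hcase i hiH
        simp [hadj, hvi, not_lt.mpr hvi.le, hvi.not_gt]
      exact hiv (h2 ▸ h1)
    · -- row v would realize q0 on L
      push_neg at hcase
      obtain ⟨h0, hh0, hh0v⟩ := hcase
      obtain ⟨j, hjL, hjv⟩ := hq0 v
      have hjlt : j < v := lt_of_lt_of_le (hLH j hjL h0 hh0) hh0v
      have hjH : j ∉ H := fun hjH => lt_irrefl j (hLH j hjL j hjH)
      have h1 : adj j v = q0 j := by
        rw [hv j (hLX j hjL)]; simp [hjH]
      have h2 : adj j v = A v j := by
        simp [hadj, hjlt]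
      exact hjv (h2 ▸ h1)
  obtain ⟨S, hScard, hhom⟩ := hEH n adj hsymm hirr hVC
  rcases hhom with hcl | hind
  · refine ⟨true, S, hScard, ?_⟩
    intro i hi j hj
    refine ⟨fun hij => ⟨habove i j hij, ?_⟩, hdiag i⟩
    have := hcl i hi j hj (Fin.ne_of_lt hij)
    rw [hsymm] at this
    simpa [hadj, hij, not_lt.mpr hij.le, hij.not_gt] using this
  · refine ⟨false, S, hScard, ?_⟩
    intro i hi j hj
    refine ⟨fun hij => ⟨habove i j hij, ?_⟩, hdiag i⟩
    have := hind j hj i hi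
    simpa [hadj, hij, not_lt.mpr hij.le, hij.not_gt] using this
end
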